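/- arXiv:2410.04805 — 8 statements merged into one kernel-verified Lean document; each statement's English description precedes it below -/
import Mathlib

section
/- Let N = 2^k with k even, n = 2^{k/2}, and n > 2. Define Bank(i) = (i mod n + ⌊i/n⌋) mod n. Then for all natural numbers i and all t with 0 ≤ t ≤ k−1, Bank(i + 2^t) ≠ Bank(i). -/
lemma bank_key (n x y d : ℕ) (h1 : 0 < d) (h2 : d < n) (hxy : y = x + d) :
    y % n ≠ x % n := by
  subst hxy
  intro h
  have hd : n ∣ (x + d) - x := (Nat.modEq_iff_dvd' (Nat.le_add_right x d)).mp h.symm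
  simp at hd
  exact absurd (Nat.le_of_dvd h1 hd) (not_le.mpr h2)

theorem bank_conflict_free_forward (k n : ℕ) (hk : Even k) (hn : n = 2 ^ (k / 2))
    (hn2 : 2 < n) (Bank : ℕ → ℕ) (hBank : ∀ i, Bank i = (i % n + i / n) % n) :
    ∀ i t : ℕ, t ≤ k - 1 → Bank (i + 2 ^ t) ≠ Bank i := by
  intro i t ht
  obtain ⟨m', hm'⟩ := hk
  set m := k / 2 with hmdef
  have hkm : k = 2 * m := by omega
  have hm2 : 2 ≤ m := by
    have h1 : (2:ℕ) ^ 1 < 2 ^ m := by simpa using hn ▸ hn2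
    have := (Nat.pow_lt_pow_iff_right (by norm_num : 1 < 2)).mp h1
    omega
  have hnpos : 0 < n := by omega
  set r := i % n with hr
  set q := i / n with hq
  have hrn : r < n := Nat.mod_lt _ hnpos
  have hi : i = n * q + r := (Nat.div_add_mod i n).symm
  rw [hBank, hBank]
  rcases lt_or_ge t m with htm | htm
  · -- t < m, so 2^t < n and 2 * 2^t ≤ n
    have h2t : 2 * 2 ^ t ≤ n := by
      rw [hn]
      calc 2 * 2 ^ t = 2 ^ (t + 1) := by ring
        _ ≤ 2 ^ m := Nat.pow_le_pow_right (by norm_num) (by omega)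
    have h2tn : 2 ^ t < n := by have := Nat.one_le_two_pow (n := t); omega
    rcases lt_or_ge (r + 2 ^ t) n with hc | hc
    · have heq : i + 2 ^ t = n * q + (r + 2 ^ t) := by omega
      rw [heq, Nat.mul_add_mod, Nat.mod_eq_of_lt hc,
        Nat.mul_add_div hnpos, Nat.div_eq_of_lt hc]
      exact bank_key n (r + q) _ (2 ^ t) (Nat.pow_pos (by norm_num))
        h2tn (by ring)
    · have hlt : r + 2 ^ t - n < n := by omega
      have hn1 : n * (q + 1) = n * q + n := by ring
      have heq : i + 2 ^ t = n * (q + 1) + (r + 2 ^ t - n) := by omega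
      rw [heq, Nat.mul_add_mod, Nat.mod_eq_of_lt hlt,
        Nat.mul_add_div hnpos, Nat.div_eq_of_lt hlt]
      have h2pos : 0 < 2 ^ t := Nat.pow_pos (by norm_num)
      refine (bank_key n (r + 2 ^ t - n + (q + 1 + 0)) (r + q) (n - 2 ^ t - 1)
        (by omega) (by omega) (by omega)).symm
  · -- m ≤ t ≤ 2m - 1
    set s := 2 ^ (t - m) with hs
    have hspos : 0 < s := Nat.pow_pos (by norm_num)
    have hsn : s < n := by
      rw [hs, hn]
      exact Nat.pow_lt_pow_right (by norm_num) (by omega)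
    have h2t : 2 ^ t = s * n := by
      rw [hs, hn, ← pow_add]
      congr 1
      omega
    have heq : i + 2 ^ t = n * (q + s) + r := by rw [h2t]; ring_nf; omega
    rw [heq, Nat.mul_add_mod, Nat.mod_eq_of_lt hrn,
      Nat.mul_add_div hnpos, Nat.div_eq_of_lt hrn]
    exact bank_key n (r + q) _ s hspos hsn (by ring)
end

section
/- Let N = 2^k with k even, n = 2^{k/2}, and n > 2. Define Bank(i) = (i mod n + ⌊i/n⌋) mod n. Then for all t with 0 ≤ t ≤ k−1 and all i ≥ 2^t, Bank(i − 2^t) ≠ Bank(i). -/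
theorem bank_conflict_free_backward (k n : ℕ) (hk : Even k) (hn : n = 2 ^ (k / 2))
    (hn2 : 2 < n) (Bank : ℕ → ℕ) (hBank : ∀ i, Bank i = (i % n + i / n) % n) :
    ∀ t i : ℕ, t ≤ k - 1 → 2 ^ t ≤ i → Bank (i - 2 ^ t) ≠ Bank i := by
  obtain ⟨m, hm⟩ := hk
  have hkm : k / 2 = m := by omega
  rw [hkm] at hn
  have hm2 : 2 ≤ m := by
    by_contra h
    interval_cases m <;> omega
  intro t i ht hti
  set j := i - 2 ^ t with hj
  have hi : i = j + 2 ^ t := by omega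
  rw [hi, hBank, hBank]
  have hn0 : 0 < n := by omega
  intro h
  -- split on t < m or m ≤ t
  by_cases htm : t < m
  · -- low case: s = 2^t < n, in fact 2*s ≤ n
    set s := 2 ^ t with hs
    have hs1 : 1 ≤ s := Nat.one_le_two_pow
    have hs2 : 2 * s ≤ n := by
      rw [hn, hs]
      calc 2 * 2 ^ t = 2 ^ (t + 1) := by ring
        _ ≤ 2 ^ m := Nat.pow_le_pow_right (by norm_num) (by omega)
    set a := j % n with ha
    set q := j / n with hq
    have han : a < n := Nat.mod_lt _ hn0
    have hjd : n * q + a = j := Nat.div_add_mod j n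
    by_cases hcase : a + s < n
    · have hmod : (j + s) % n = a + s := by
        rw [← hjd]
        rw [show n * q + a + s = a + s + n * q by ring]
        rw [Nat.add_mul_mod_self_left, Nat.mod_eq_of_lt hcase]
      have hdiv : (j + s) / n = q := by
        rw [← hjd]
        rw [show n * q + a + s = a + s + n * q by ring]
        rw [Nat.add_mul_div_left _ _ hn0, Nat.div_eq_of_lt hcase]
        omega
      rw [hmod, hdiv] at h
      have : (a + q) % n = (a + q + s) % n := by rw [h]; ring_nf
      have hdvd : n ∣ (a + q + s) - (a + q) :=
        (Nat.modEq_iff_dvd' (Nat.le_add_right _ _)).mp this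
      have : n ∣ s := by simpa using hdvd
      have := Nat.le_of_dvd (by omega) this
      omega
    · push_neg at hcase
      have hmod : (j + s) % n = a + s - n := by
        rw [← hjd]
        rw [show n * q + a + s = a + s + n * q by ring]
        rw [Nat.add_mul_mod_self_left]
        rw [Nat.mod_eq_sub_mod hcase, Nat.mod_eq_of_lt (by omega)]
      have hdiv : (j + s) / n = q + 1 := by
        rw [← hjd]
        rw [show n * q + a + s = a + s + n * q by ring]
        rw [Nat.add_mul_div_left _ _ hn0]
        have h1 : (a + s) / n = 1 :=
          Nat.div_eq_of_lt_le (by omega) (by omega)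
        omega
      rw [hmod, hdiv] at h
      have hle : a + s - n + (q + 1) ≤ a + q := by omega
      have hdvd : n ∣ (a + q) - (a + s - n + (q + 1)) :=
        (Nat.modEq_iff_dvd' hle).mp h.symm
      have heq : (a + q) - (a + s - n + (q + 1)) = n - s - 1 := by omega
      rw [heq] at hdvd
      have hns : n - s - 1 ≠ 0 := by omega
      have := Nat.le_of_dvd (by omega) hdvd
      omega
  · -- high case: 2^t = 2^(t-m) * n
    push_neg at htm
    set u := t - m with hu
    have hpow : 2 ^ t = 2 ^ u * n := by
      rw [hn, ← pow_add]
      congr 1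
      omega
    have hun : 2 ^ u < n := by
      rw [hn]
      exact Nat.pow_lt_pow_right (by norm_num) (by omega)
    rw [hpow] at h
    rw [Nat.add_mul_mod_self_right, Nat.add_mul_div_right _ _ hn0] at h
    have : (j % n + j / n) % n = (j % n + j / n + 2 ^ u) % n := by
      rw [h]; ring_nf
    have hdvd : n ∣ (j % n + j / n + 2 ^ u) - (j % n + j / n) :=
      (Nat.modEq_iff_dvd' (Nat.le_add_right _ _)).mp this
    have hdu : n ∣ 2 ^ u := by simpa using hdvd
    have hle2 := Nat.le_of_dvd (by positivity) hdu
    omega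
end

section
/- Let q ≥ 2, k = ⌈log₂ q⌉, m = ⌊2^{2k}/q⌋, and let a, b be nonnegative integers with a, b < q. Set t₁ = a·b. Then the quantity t₂' = ((t₁ >> (k−1)) · m) >> (k+1) satisfies t₂' ≤ t₂ ≤ t₂' + 1, where t₂ = (t₁ · m) >> 2k. -/
theorem barrett_t2_close (q k m a b t₁ t₂ t₂' : ℕ) (hq : 2 ≤ q)
    (hk : k = Nat.clog 2 q) (hm : m = 2 ^ (2 * k) / q)
    (ha : a < q) (hb : b < q) (ht₁ : t₁ = a * b)
    (ht₂ : t₂ = t₁ * m / 2 ^ (2 * k))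
    (ht₂' : t₂' = t₁ / 2 ^ (k - 1) * m / 2 ^ (k + 1)) :
    t₂' ≤ t₂ ∧ t₂ ≤ t₂' + 1 := by
  have hk1 : 0 < k := by
    rw [hk]; exact Nat.clog_pos one_lt_two hq
  obtain ⟨j, rfl⟩ : ∃ j, k = j + 1 := ⟨k - 1, by omega⟩
  have hql : 2 ^ j < q := by
    have := Nat.pow_pred_clog_lt_self one_lt_two (by omega : 1 < q)
    rwa [← hk, Nat.pred_succ] at this
  have hpow : 2 ^ j * 2 ^ (j + 2) = 2 ^ (2 * (j + 1)) := by
    rw [← pow_add]; ring_nf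
  have hmlt : m < 2 ^ (j + 2) := by
    rw [hm, Nat.div_lt_iff_lt_mul (by omega)]
    calc 2 ^ (2 * (j + 1)) = 2 ^ (j + 2) * 2 ^ j := by rw [← pow_add]; ring_nf
    _ < 2 ^ (j + 2) * q := by gcongr
  simp only [Nat.add_sub_cancel] at ht₂'
  set u := t₁ / 2 ^ j with hu
  have hut : 2 ^ j * u ≤ t₁ := by rw [mul_comm]; exact Nat.div_mul_le_self _ _
  constructor
  · rw [ht₂, ht₂']
    rw [Nat.le_div_iff_mul_le (by positivity)]
    calc u * m / 2 ^ (j + 1 + 1) * 2 ^ (2 * (j + 1))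
        = u * m / 2 ^ (j + 2) * 2 ^ (j + 2) * 2 ^ j := by
          rw [mul_assoc, mul_comm (2^(j+2)), hpow]
      _ ≤ u * m * 2 ^ j := Nat.mul_le_mul_right _ (Nat.div_mul_le_self _ _)
      _ = (2 ^ j * u) * m := by ring
      _ ≤ t₁ * m := Nat.mul_le_mul_right _ hut
  · rw [ht₂, ht₂']
    have h1 : t₁ * m / 2 ^ (2 * (j + 1)) < u * m / 2 ^ (j + 1 + 1) + 2 := by
      rw [Nat.div_lt_iff_lt_mul (by positivity)]
      have h2 : u * m < (u * m / 2 ^ (j + 2) + 1) * 2 ^ (j + 2) :=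
        (Nat.div_lt_iff_lt_mul (by positivity)).mp (Nat.lt_succ_self _)
      have hr : t₁ % 2 ^ j < 2 ^ j := Nat.mod_lt _ (by positivity)
      calc t₁ * m = (2 ^ j * u + t₁ % 2 ^ j) * m := by rw [Nat.div_add_mod]
        _ = 2 ^ j * (u * m) + (t₁ % 2 ^ j) * m := by ring
        _ < 2 ^ j * ((u * m / 2 ^ (j + 2) + 1) * 2 ^ (j + 2)) + 2 ^ j * 2 ^ (j + 2) := by
            exact add_lt_add (by gcongr) (mul_lt_mul'' hr hmlt (by omega) (by omega))
        _ = (u * m / 2 ^ (j + 1 + 1) + 2) * 2 ^ (2 * (j + 1)) := by rw [← hpow]; ring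
    omega
end

section
/- Let q ≥ 2, k = ⌈log₂ q⌉, m = ⌊2^{2k}/q⌋, a, b < q nonnegative integers, t₁ = a·b. Let t₄ = t₁ − (⌊t₁·m / 2^{2k}⌋)·q and t₄' = t₁ − (⌊⌊t₁/2^{k−1}⌋·m / 2^{k+1}⌋)·q. Then t₄' = t₄ or t₄' = t₄ + q. -/
theorem barrett_t4_close (q k m a b t₁ : ℕ) (hq : 2 ≤ q)
    (hk : k = Nat.clog 2 q) (hm : m = 2 ^ (2 * k) / q)
    (ha : a < q) (hb : b < q) (ht₁ : t₁ = a * b)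
    (t₄ t₄' : ℤ)
    (ht₄ : t₄ = (t₁ : ℤ) - ((t₁ * m / 2 ^ (2 * k) : ℕ) : ℤ) * q)
    (ht₄' : t₄' = (t₁ : ℤ) - ((t₁ / 2 ^ (k - 1) * m / 2 ^ (k + 1) : ℕ) : ℤ) * q) :
    t₄' = t₄ ∨ t₄' = t₄ + q := by
  have hk1 : 0 < k := hk ▸ Nat.clog_pos one_lt_two hq
  have hqk : 2 ^ (k - 1) < q := by
    have := Nat.pow_pred_clog_lt_self one_lt_two (x := q) hq
    rwa [← hk, Nat.pred_eq_sub_one] at this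
  have hpow : 2 ^ (k + 1) * 2 ^ (k - 1) = 2 ^ (2 * k) := by
    rw [← pow_add]; congr 1; omega
  have hmlt : m < 2 ^ (k + 1) := by
    by_contra h
    push_neg at h
    have h2 : m * q ≤ 2 ^ (2 * k) := hm ▸ Nat.div_mul_le_self _ _
    have h3 : 2 ^ (k + 1) * (2 ^ (k - 1) + 1) ≤ m * q := Nat.mul_le_mul h (by omega)
    have h4 : 2 ^ (k + 1) * (2 ^ (k - 1) + 1) = 2 ^ (2 * k) + 2 ^ (k + 1) := by
      rw [Nat.mul_add, hpow, Nat.mul_one]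
    have h5 : 0 < 2 ^ (k + 1) := Nat.pow_pos (by norm_num)
    omega
  set d := t₁ / 2 ^ (k - 1) with hd
  set Q := t₁ * m / 2 ^ (2 * k) with hQ
  set Q' := d * m / 2 ^ (k + 1) with hQ'
  have hle : Q' ≤ Q := by
    have e : d * m * 2 ^ (k - 1) / 2 ^ (2 * k) = Q' := by
      rw [← hpow, Nat.mul_div_mul_right _ _ (Nat.pow_pos (by norm_num))]
    rw [hQ, ← e]
    apply Nat.div_le_div_right
    calc d * m * 2 ^ (k - 1) = d * 2 ^ (k - 1) * m := by ring
      _ ≤ t₁ * m := Nat.mul_le_mul_right _ (Nat.div_mul_le_self _ _)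
  have hge : Q ≤ Q' + 1 := by
    have h2k : 0 < 2 ^ (2 * k) := Nat.pow_pos (by norm_num)
    have e1 := Nat.div_add_mod t₁ (2 ^ (k - 1))
    have e2 := Nat.div_add_mod (d * m) (2 ^ (k + 1))
    have m1 : t₁ % 2 ^ (k - 1) < 2 ^ (k - 1) :=
      Nat.mod_lt _ (Nat.pow_pos (by norm_num))
    have m2 : d * m % 2 ^ (k + 1) < 2 ^ (k + 1) :=
      Nat.mod_lt _ (Nat.pow_pos (by norm_num))
    have key : t₁ * m < (Q' + 2) * 2 ^ (2 * k) := by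
      have : t₁ * m = 2 ^ (k - 1) * (d * m) + (t₁ % 2 ^ (k - 1)) * m := by
        calc t₁ * m = (2 ^ (k - 1) * d + t₁ % 2 ^ (k - 1)) * m := by rw [e1]
          _ = 2 ^ (k - 1) * (d * m) + (t₁ % 2 ^ (k - 1)) * m := by ring
      rw [this, ← e2]
      have b1 : (t₁ % 2 ^ (k - 1)) * m ≤ 2 ^ (k - 1) * 2 ^ (k + 1) :=
        Nat.mul_le_mul (le_of_lt m1) (le_of_lt hmlt)
      have b2 : 2 ^ (k - 1) * (d * m % 2 ^ (k + 1)) < 2 ^ (k - 1) * 2 ^ (k + 1) :=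
        mul_lt_mul_of_pos_left m2 (Nat.pow_pos (by norm_num))
      calc 2 ^ (k - 1) * (2 ^ (k + 1) * Q' + d * m % 2 ^ (k + 1)) + (t₁ % 2 ^ (k - 1)) * m
          = Q' * 2 ^ (2 * k) + 2 ^ (k - 1) * (d * m % 2 ^ (k + 1)) + (t₁ % 2 ^ (k - 1)) * m := by
            rw [← hpow]; ring
        _ < Q' * 2 ^ (2 * k) + 2 ^ (k - 1) * 2 ^ (k + 1) + 2 ^ (k - 1) * 2 ^ (k + 1) := by
            omega
        _ = (Q' + 2) * 2 ^ (2 * k) := by rw [← hpow]; ring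
    have := (Nat.div_lt_iff_lt_mul h2k).mpr key
    omega
  have hcase : Q = Q' ∨ Q = Q' + 1 := by omega
  rcases hcase with h | h
  · left; rw [ht₄, ht₄', h]
  · right; rw [ht₄, ht₄', h]; push_cast; ring
end

section
/- Let q ≥ 2, k = ⌈log₂ q⌉, m = ⌊2^{2k}/q⌋, and a, b nonnegative integers with a, b < q. Let t₄' = a·b − (⌊⌊a·b/2^{k−1}⌋·m / 2^{k+1}⌋)·q. Then 0 ≤ t₄' < 3q, and the result of subtracting 2q if t₄' ≥ 2q, else subtracting q if t₄' ≥ q, else leaving t₄' unchanged, equals (a·b) mod q. -/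
lemma lt_div_mul_add (n d : ℕ) (hd : 0 < d) : (n : ℤ) < (n / d : ℕ) * d + d := by
  have h1' : ((n / d : ℕ) : ℤ) * d + (n % d : ℕ) = n := by exact_mod_cast Nat.div_add_mod' n d
  have h2' : ((n % d : ℕ) : ℤ) < d := by exact_mod_cast Nat.mod_lt n hd
  linarith

theorem hardware_barrett_correct (q k m a b : ℕ) (hq : 2 ≤ q)
    (hk : k = Nat.clog 2 q) (hm : m = 2 ^ (2 * k) / q)
    (ha : a < q) (hb : b < q)
    (t₄' : ℤ)
    (ht₄' : t₄' = (a * b : ℕ) - (((a * b) / 2 ^ (k - 1) * m / 2 ^ (k + 1) : ℕ) : ℤ) * q) :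
    0 ≤ t₄' ∧ t₄' < 3 * q ∧
      (if t₄' ≥ 2 * q then t₄' - 2 * q else if t₄' ≥ q then t₄' - q else t₄')
        = ((a * b : ℕ) : ℤ) % q := by
  have hk1 : 1 ≤ k := by
    rw [hk]; exact Nat.clog_pos (by norm_num) hq
  have hq2k : q ≤ 2 ^ k := hk ▸ Nat.le_pow_clog (by norm_num) q
  have hlow : 2 ^ (k - 1) < q := by
    rw [hk]; exact Nat.pow_pred_clog_lt_self (by norm_num) hq
  set X : ℕ := a * b with hX
  set S : ℕ := X / 2 ^ (k - 1) with hS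
  set T : ℕ := S * m / 2 ^ (k + 1) with hT
  have hAB : (2 : ℕ) ^ (k - 1) * 2 ^ (k + 1) = 2 ^ (2 * k) := by
    rw [← pow_add]; congr 1; omega
  -- cast everything into ℤ
  have h1 : (S : ℤ) * 2 ^ (k - 1) ≤ X := by
    exact_mod_cast Nat.div_mul_le_self X (2 ^ (k - 1))
  have h1' : (X : ℤ) < S * 2 ^ (k - 1) + 2 ^ (k - 1) := by
    rw [hS]; exact_mod_cast lt_div_mul_add X (2 ^ (k - 1)) (by positivity)
  have h2 : (m : ℤ) * q ≤ 2 ^ (2 * k) := by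
    rw [hm]; exact_mod_cast Nat.div_mul_le_self (2 ^ (2 * k)) q
  have h2' : (2 : ℤ) ^ (2 * k) < m * q + q := by
    rw [hm]; exact_mod_cast lt_div_mul_add (2 ^ (2 * k)) q (by omega)
  have h3 : (T : ℤ) * 2 ^ (k + 1) ≤ S * m := by
    exact_mod_cast Nat.div_mul_le_self (S * m) (2 ^ (k + 1))
  have h3' : (S : ℤ) * m < T * 2 ^ (k + 1) + 2 ^ (k + 1) := by
    have := lt_div_mul_add (S * m) (2 ^ (k + 1)) (by positivity)
    rw [hT]; push_cast at this ⊢; linarith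
  have hABz : (2 : ℤ) ^ (k - 1) * 2 ^ (k + 1) = 2 ^ (2 * k) := by exact_mod_cast hAB
  have hXq : (X : ℤ) < q * 2 ^ k := by
    have : (X : ℤ) < q * q := by
      have : X < q * q := Nat.mul_lt_mul'' ha hb
      exact_mod_cast this
    have hq2kz : (q : ℤ) ≤ 2 ^ k := by exact_mod_cast hq2k
    nlinarith [show (0:ℤ) < q by exact_mod_cast Nat.lt_of_lt_of_le Nat.zero_lt_two hq]
  have hC : (2 : ℤ) ^ k * 2 ^ k = 2 ^ (2 * k) := by rw [← pow_add]; congr 1; omega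
  have hqpos : (0 : ℤ) < q := by exact_mod_cast Nat.lt_of_lt_of_le Nat.zero_lt_two hq
  have hlowz : (2 : ℤ) ^ (k - 1) < q := by exact_mod_cast hlow
  have hq2kz : (q : ℤ) ≤ 2 ^ k := by exact_mod_cast hq2k
  have hCpos : (0 : ℤ) < 2 ^ (2 * k) := by positivity
  have hSnn : (0 : ℤ) ≤ S := by positivity
  have hTnn : (0 : ℤ) ≤ T := by positivity
  have hXnn : (0 : ℤ) ≤ X := by positivity
  have hmnn : (0 : ℤ) ≤ m := by positivity
  -- lower bound : T * q ≤ X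
  have hlb : (T : ℤ) * q ≤ X := by
    have key : (T : ℤ) * q * 2 ^ (2 * k) ≤ X * 2 ^ (2 * k) := by
      calc (T : ℤ) * q * 2 ^ (2 * k) = (T * 2 ^ (k + 1)) * (q * 2 ^ (k - 1)) := by
            rw [← hABz]; ring
        _ ≤ (S * m) * (q * 2 ^ (k - 1)) := by
            have : (0:ℤ) ≤ q * 2 ^ (k - 1) := by positivity
            exact mul_le_mul_of_nonneg_right h3 this
        _ = (m * q) * (S * 2 ^ (k - 1)) := by ring
        _ ≤ 2 ^ (2 * k) * (S * 2 ^ (k - 1)) := by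
            have : (0:ℤ) ≤ S * 2 ^ (k - 1) := by positivity
            exact mul_le_mul_of_nonneg_right h2 this
        _ ≤ 2 ^ (2 * k) * X := by
            exact mul_le_mul_of_nonneg_left h1 (le_of_lt hCpos)
        _ = X * 2 ^ (2 * k) := by ring
    exact le_of_mul_le_mul_right key hCpos
  -- upper bound : X < T * q + 3 * q
  have hub : (X : ℤ) < T * q + 3 * q := by
    have hCq : (0:ℤ) ≤ 2 ^ (2 * k) - q := by
      have : (2:ℤ) ^ k ≤ 2 ^ (2 * k) := by
        apply pow_le_pow_right₀ (by norm_num); omega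
      linarith
    have key : ((X : ℤ) - 2 ^ (k - 1)) * (2 ^ (2 * k) - q) ≤ (T + 1) * q * 2 ^ (2 * k) := by
      calc ((X : ℤ) - 2 ^ (k - 1)) * (2 ^ (2 * k) - q)
          ≤ (S * 2 ^ (k - 1)) * (2 ^ (2 * k) - q) := by
            apply mul_le_mul_of_nonneg_right _ hCq; linarith
        _ = 2 ^ (k - 1) * (S * 2 ^ (2 * k) - S * q) := by ring
        _ ≤ 2 ^ (k - 1) * (S * (m * q + q) - S * q) := by
            apply mul_le_mul_of_nonneg_left _ (by positivity)
            have : (S:ℤ) * 2 ^ (2 * k) ≤ S * (m * q + q) :=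
              mul_le_mul_of_nonneg_left (le_of_lt h2') hSnn
            linarith
        _ = (S * m) * (q * 2 ^ (k - 1)) := by ring
        _ ≤ (T * 2 ^ (k + 1) + 2 ^ (k + 1)) * (q * 2 ^ (k - 1)) := by
            apply mul_le_mul_of_nonneg_right (le_of_lt h3') (by positivity)
        _ = (T + 1) * q * (2 ^ (k - 1) * 2 ^ (k + 1)) := by ring
        _ = (T + 1) * q * 2 ^ (2 * k) := by rw [hABz]
    have hAC : (2:ℤ) ^ (k - 1) * 2 ^ (2 * k) < q * 2 ^ (2 * k) :=
      mul_lt_mul_of_pos_right hlowz hCpos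
    have hXqC : (X : ℤ) * q < q * 2 ^ (2 * k) := by
      calc (X : ℤ) * q < (q * 2 ^ k) * q := mul_lt_mul_of_pos_right hXq hqpos
        _ = q * (2 ^ k * q) := by ring
        _ ≤ q * (2 ^ k * 2 ^ k) := by
            apply mul_le_mul_of_nonneg_left _ (le_of_lt hqpos)
            exact mul_le_mul_of_nonneg_left hq2kz (by positivity)
        _ = q * 2 ^ (2 * k) := by rw [hC]
    have hAqnn : (0:ℤ) ≤ 2 ^ (k - 1) * q := by positivity
    have key2 : (X : ℤ) * 2 ^ (2 * k) < (T + 3) * q * 2 ^ (2 * k) := by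
      linarith [key, hAC, hXqC, hAqnn]
    have := lt_of_mul_lt_mul_right key2 (le_of_lt hCpos)
    linarith
  have ht0 : 0 ≤ t₄' := by rw [ht₄']; linarith
  have ht3 : t₄' < 3 * q := by rw [ht₄']; linarith
  refine ⟨ht0, ht3, ?_⟩
  have hmodeq : t₄' % q = (X : ℤ) % q := by
    rw [ht₄']
    simp [Int.sub_emod, Int.mul_emod_left]
  rw [← hmodeq]
  split_ifs with h1c h2c
  · have : t₄' % (q:ℤ) = (t₄' - 2 * q) % q := by
      simp [Int.sub_emod, Int.mul_emod_left, Int.emod_emod_of_dvd t₄' (dvd_refl (q:ℤ))]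
    rw [this, Int.emod_eq_of_lt (by linarith) (by linarith)]
  · have : t₄' % (q:ℤ) = (t₄' - q) % q := by
      simp [Int.sub_emod, Int.emod_emod_of_dvd t₄' (dvd_refl (q:ℤ))]
    rw [this, Int.emod_eq_of_lt (by linarith) (by linarith)]
  · rw [Int.emod_eq_of_lt ht0 (by push_neg at h2c; linarith)]
end

section
/- Let q be prime, N = 2^k with q ≡ 1 (mod 2N), and let ψ be a primitive 2N-th root of unity mod q, ω = ψ². For polynomials a, b ∈ (ℤ/q)[x] of degree < N, define Â[j] = Σ_n a[n]·ψ^n·ω^{nj} and similarly B̂. If Ĉ[j] = Â[j]·B̂[j] for all j, then the polynomial c with coefficients c[n] = N^{−1}·ψ^{−n}·Σ_j Ĉ[j]·ω^{−nj} (mod q) equals a·b in ℤ_q[x]/(x^N + 1). -/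
open Finset in
theorem ntt_negacyclic_mult_correct (q N k : ℕ) [Fact (Nat.Prime q)]
    (hN : N = 2 ^ k) (hq : q % (2 * N) = 1)
    (ψ ω : ZMod q) (hψ : orderOf ψ = 2 * N) (hω : ω = ψ ^ 2)
    (a b : Fin N → ZMod q)
    (Ahat Bhat Chat : Fin N → ZMod q)
    (hA : ∀ j : Fin N, Ahat j = ∑ n : Fin N, a n * ψ ^ (n : ℕ) * ω ^ ((n : ℕ) * (j : ℕ)))
    (hB : ∀ j : Fin N, Bhat j = ∑ n : Fin N, b n * ψ ^ (n : ℕ) * ω ^ ((n : ℕ) * (j : ℕ)))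
    (hC : ∀ j : Fin N, Chat j = Ahat j * Bhat j)
    (c : Fin N → ZMod q)
    (hc : ∀ n : Fin N, c n = (N : ZMod q)⁻¹ * ψ⁻¹ ^ (n : ℕ) *
        ∑ j : Fin N, Chat j * ω⁻¹ ^ ((n : ℕ) * (j : ℕ))) :
    ∀ n : Fin N, c n =
      (∑ i : Fin N, ∑ j : Fin N, if (i : ℕ) + (j : ℕ) = (n : ℕ) then a i * b j else 0) -
      (∑ i : Fin N, ∑ j : Fin N, if (i : ℕ) + (j : ℕ) = (n : ℕ) + N then a i * b j else 0) := by
  intro n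
  have hNpos : 0 < N := by rw [hN]; positivity
  have hqprime : Nat.Prime q := Fact.out
  have hq1 : 1 < q := hqprime.one_lt
  have hq2N : 2 * N < q := by
    have h := Nat.div_add_mod q (2 * N)
    rw [hq] at h
    rcases Nat.eq_zero_or_pos (q / (2 * N)) with h0 | h0
    · rw [h0] at h; simp at h; omega
    · nlinarith
  have hNq : (N : ZMod q) ≠ 0 := by
    rw [Ne, ZMod.natCast_eq_zero_iff]
    intro hd
    have := Nat.le_of_dvd hNpos hd
    omega
  have hψpow : ψ ^ (2 * N) = 1 := by rw [← hψ]; exact pow_orderOf_eq_one ψ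
  have hψ0 : ψ ≠ 0 := by
    intro h
    rw [h, zero_pow (by omega)] at hψpow
    exact zero_ne_one hψpow
  have hω0 : ω ≠ 0 := by rw [hω]; exact pow_ne_zero _ hψ0
  have hωord : orderOf ω = N := by
    rw [hω, orderOf_pow' ψ two_ne_zero, hψ]
    have hg : Nat.gcd (2 * N) 2 = 2 :=
      Nat.dvd_antisymm (Nat.gcd_dvd_right _ _) (Nat.dvd_gcd ⟨N, rfl⟩ dvd_rfl)
    rw [hg]; omega
  have hωN : ω ^ N = 1 := by rw [← hωord]; exact pow_orderOf_eq_one ω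
  have hψN : ψ ^ N = -1 := by
    have hsq : ψ ^ N * ψ ^ N = 1 := by rw [← pow_add, show N + N = 2 * N by ring]; exact hψpow
    rcases mul_self_eq_one_iff.mp hsq with h | h
    · exfalso
      have hdvd : orderOf ψ ∣ N := orderOf_dvd_of_pow_eq_one h
      rw [hψ] at hdvd
      have := Nat.le_of_dvd hNpos hdvd
      omega
    · exact h
  -- geometric sum orthogonality
  have hsum : ∀ z : ZMod q, z ^ N = 1 →
      ∑ j : Fin N, z ^ (j : ℕ) = if z = 1 then (N : ZMod q) else 0 := by
    intro z hz
    rw [Fin.sum_univ_eq_sum_range (fun m => z ^ m) N]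
    split
    · next h => simp [h]
    · next h => rw [geom_sum_eq h, hz, sub_self, zero_div]
  -- injectivity of powers modulo the order
  have hωinj : ∀ s t : ℕ, ω ^ s = ω ^ t → N ∣ (s - t) ∧ N ∣ (t - s) := by
    have key : ∀ s t : ℕ, t ≤ s → ω ^ s = ω ^ t → N ∣ (s - t) := by
      intro s t hle hst
      have h2 : ω ^ (s - t) * ω ^ t = 1 * ω ^ t := by
        rw [← pow_add, Nat.sub_add_cancel hle, hst, one_mul]
      have h1 : ω ^ (s - t) = 1 := mul_right_cancel₀ (pow_ne_zero _ hω0) h2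
      rw [← hωord]; exact orderOf_dvd_of_pow_eq_one h1
    intro s t hst
    constructor
    · rcases le_or_gt t s with hle | hlt
      · exact key s t hle hst
      · rw [Nat.sub_eq_zero_of_le (le_of_lt hlt)]; exact dvd_zero _
    · rcases le_or_gt s t with hle | hlt
      · exact key t s hle hst.symm
      · rw [Nat.sub_eq_zero_of_le (le_of_lt hlt)]; exact dvd_zero _
  -- main computation
  have step1 : ∑ j : Fin N, Chat j * ω⁻¹ ^ ((n : ℕ) * (j : ℕ)) =
      ∑ i : Fin N, ∑ i' : Fin N, a i' * b i * ψ ^ ((i : ℕ) + (i' : ℕ)) *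
        ∑ j : Fin N, (ω ^ ((i : ℕ) + (i' : ℕ)) * ω⁻¹ ^ (n : ℕ)) ^ (j : ℕ) := by
    simp only [hC, hA, hB, Finset.sum_mul_sum, Finset.sum_mul, Finset.mul_sum]
    rw [Finset.sum_comm]
    refine Finset.sum_congr rfl fun i _ => ?_
    rw [Finset.sum_comm]
    refine Finset.sum_congr rfl fun i' _ => ?_
    refine Finset.sum_congr rfl fun j _ => ?_
    rw [mul_pow, ← pow_mul, ← pow_mul, pow_add, ← pow_add]
    ring
  rw [hc, step1]
  conv_lhs => rw [Finset.sum_comm]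
  rw [Finset.mul_sum, ← Finset.sum_sub_distrib]
  refine Finset.sum_congr rfl fun i _ => ?_
  rw [Finset.mul_sum, ← Finset.sum_sub_distrib]
  refine Finset.sum_congr rfl fun i' _ => ?_
  rw [Nat.add_comm (i' : ℕ) (i : ℕ)]
  -- per-term analysis
  have hz : (ω ^ ((i : ℕ) + (i' : ℕ)) * ω⁻¹ ^ (n : ℕ)) ^ N = 1 := by
    rw [mul_pow, pow_right_comm, hωN, one_pow, pow_right_comm, inv_pow, hωN, inv_one, one_pow,
      mul_one]
  rw [hsum _ hz]
  have hi : (i : ℕ) < N := i.isLt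
  have hi' : (i' : ℕ) < N := i'.isLt
  have hn : (n : ℕ) < N := n.isLt
  rcases eq_or_ne ((i : ℕ) + (i' : ℕ)) (n : ℕ) with hcase | hne1
  · have hone : ω ^ ((i : ℕ) + (i' : ℕ)) * ω⁻¹ ^ (n : ℕ) = 1 := by
      rw [hcase, ← mul_pow, mul_inv_cancel₀ hω0, one_pow]
    rw [if_pos hone, if_pos hcase,
      if_neg (by omega : ¬((i : ℕ) + (i' : ℕ) = (n : ℕ) + N)), hcase]
    field_simp [hψ0, hNq]
    have hpp : ψ⁻¹ ^ (n : ℕ) * ψ ^ (n : ℕ) = 1 := by rw [← mul_pow, inv_mul_cancel₀ hψ0, one_pow]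
    rw [one_div]
    linear_combination (a i * b i') * hpp
  rcases eq_or_ne ((i : ℕ) + (i' : ℕ)) ((n : ℕ) + N) with hcase | hne2
  · have hone : ω ^ ((i : ℕ) + (i' : ℕ)) * ω⁻¹ ^ (n : ℕ) = 1 := by
      rw [hcase, pow_add, hωN, mul_one, ← mul_pow, mul_inv_cancel₀ hω0, one_pow]
    rw [if_pos hone, if_neg hne1, if_pos hcase, hcase, pow_add, hψN]
    field_simp [hψ0, hNq]
    have hpp : ψ⁻¹ ^ (n : ℕ) * ψ ^ (n : ℕ) = 1 := by rw [← mul_pow, inv_mul_cancel₀ hψ0, one_pow]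
    rw [one_div]
    linear_combination (-(a i * b i')) * hpp
  · have hnone : ω ^ ((i : ℕ) + (i' : ℕ)) * ω⁻¹ ^ (n : ℕ) ≠ 1 := by
      intro h1
      rw [inv_pow, mul_inv_eq_one₀ (pow_ne_zero _ hω0)] at h1
      obtain ⟨⟨m1, hm1⟩, ⟨m2, hm2⟩⟩ := hωinj _ _ h1
      rcases le_or_gt (n : ℕ) ((i : ℕ) + (i' : ℕ)) with hle | hlt
      · match m1, hm1 with
        | 0, hm1 => rw [Nat.mul_zero] at hm1; omega
        | 1, hm1 => rw [Nat.mul_one] at hm1; omega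
        | (m + 2), hm1 =>
          have h3 : 2 * N ≤ N * (m + 2) := by nlinarith
          omega
      · match m2, hm2 with
        | 0, hm2 => rw [Nat.mul_zero] at hm2; omega
        | (m + 1), hm2 =>
          have h3 : N ≤ N * (m + 1) := by nlinarith
          omega
    rw [if_neg hnone, if_neg hne1, if_neg hne2]
    simp
end

section
/- Let n be a power of two with n > 2 and s, i integers with 1 ≤ s < n. If s is a power of two, then ((i + s) mod n + ⌊(i + s)/n⌋) mod n ≠ (i mod n + ⌊i/n⌋) mod n. -/
theorem bank_conflict_free_small_stride (n : ℕ) (hn : ∃ j, n = 2 ^ j) (hn2 : 2 < n)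
    (s i : ℕ) (hs1 : 1 ≤ s) (hsn : s < n) (hs : ∃ t, s = 2 ^ t) :
    ((i + s) % n + (i + s) / n) % n ≠ (i % n + i / n) % n := by
  obtain ⟨j, hj⟩ := hn
  obtain ⟨t, ht⟩ := hs
  have hn0 : 0 < n := by omega
  set r := i % n with hr
  set q := i / n with hq
  have hrn : r < n := Nat.mod_lt _ hn0
  have hi : i = r + q * n := (Nat.mod_add_div' i n).symm
  by_cases hc : r + s < n
  · -- no wrap-around
    have hm : (i + s) % n = r + s := by
      rw [hi, add_right_comm, Nat.add_mul_mod_self_right, Nat.mod_eq_of_lt hc]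
    have hd : (i + s) / n = q := by
      rw [hi, add_right_comm, Nat.add_mul_div_right _ _ hn0,
        Nat.div_eq_of_lt hc, zero_add]
    rw [hm, hd]
    intro h
    have h' : r + q ≡ r + q + s [MOD n] := by
      unfold Nat.ModEq
      rw [← h]; ring_nf
    have := (Nat.modEq_iff_dvd' (Nat.le_add_right _ _)).mp h'
    simp only [Nat.add_sub_cancel_left] at this
    have := Nat.le_of_dvd (by omega) this
    omega
  · -- wrap-around
    have hm : (i + s) % n = r + s - n := by
      rw [hi, add_right_comm]
      rw [Nat.add_mul_mod_self_right]
      have : r + s = (r + s - n) + 1 * n := by omega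
      rw [this, Nat.add_mul_mod_self_right, Nat.mod_eq_of_lt (by omega)]
      omega
    have hd : (i + s) / n = q + 1 := by
      rw [hi, add_right_comm, Nat.add_mul_div_right _ _ hn0]
      have : r + s = (r + s - n) + 1 * n := by omega
      rw [this, Nat.add_mul_div_right _ _ hn0, Nat.div_eq_of_lt (by omega)]
      omega
    rw [hm, hd]
    intro h
    have h' : r + s - n + (q + 1) ≡ r + q [MOD n] := h
    have hle : r + s - n + (q + 1) ≤ r + q := by omega
    have hdvd := (Nat.modEq_iff_dvd' hle).mp h'
    have heq : r + q - (r + s - n + (q + 1)) = n - s - 1 := by omega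
    rw [heq] at hdvd
    have h0 : n - s - 1 = 0 := Nat.eq_zero_of_dvd_of_lt hdvd (by omega)
    -- so s = n - 1
    have hsn1 : s = n - 1 := by omega
    have hjn : 2 ∣ n := by
      rw [hj]
      exact dvd_pow_self 2 (by rintro rfl; simp at hj; omega)
    have ht1 : 1 ≤ t := by
      by_contra hlt
      interval_cases t; omega
    have hst : 2 ∣ s := by
      rw [ht]
      exact dvd_pow_self 2 (by omega)
    omega
end

section
/- For any nonnegative integers x, m, and any k ≥ 1: ⌊x·m / 2^{2k}⌋ − 1 ≤ ⌊⌊x/2^{k−1}⌋·m / 2^{k+1}⌋ ≤ ⌊x·m / 2^{2k}⌋, provided m < 2^{k+1}. -/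
theorem shift_splitting_inequality (x m k : ℕ) (hk : 1 ≤ k) (hm : m < 2 ^ (k + 1)) :
    x * m / 2 ^ (2 * k) - 1 ≤ x / 2 ^ (k - 1) * m / 2 ^ (k + 1) ∧
    x / 2 ^ (k - 1) * m / 2 ^ (k + 1) ≤ x * m / 2 ^ (2 * k) := by
  set P := 2 ^ (k - 1) with hP
  set Q := 2 ^ (k + 1) with hQ
  have hPpos : 0 < P := by positivity
  have hQpos : 0 < Q := by positivity
  have hsplit : 2 ^ (2 * k) = P * Q := by
    rw [hP, hQ, ← pow_add]; congr 1; omega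
  set q := x / P with hq
  set r := x % P with hr
  have hx : x = P * q + r := (Nat.div_add_mod x P).symm
  have hrlt : r < P := Nat.mod_lt x hPpos
  set d := q * m / Q with hd
  set s := q * m % Q with hs
  have hqm : q * m = Q * d + s := (Nat.div_add_mod (q * m) Q).symm
  have hslt : s < Q := Nat.mod_lt _ hQpos
  have key : x * m = P * Q * d + (P * s + r * m) := by
    rw [hx]
    calc (P * q + r) * m = P * (q * m) + r * m := by ring
      _ = P * (Q * d + s) + r * m := by rw [← hqm]
      _ = P * Q * d + (P * s + r * m) := by ring
  constructor
  · have h1 : x * m < (d + 2) * (P * Q) := by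
      have h2 : P * s < P * Q := (Nat.mul_lt_mul_left hPpos).mpr hslt
      have h3 : r * m < P * Q := Nat.mul_lt_mul'' hrlt hm
      calc x * m = P * Q * d + (P * s + r * m) := key
        _ < P * Q * d + (P * Q + P * Q) := by omega
        _ = (d + 2) * (P * Q) := by ring
    have h4 : x * m / (P * Q) < d + 2 :=
      (Nat.div_lt_iff_lt_mul (by positivity)).mpr h1
    rw [hsplit]
    exact Nat.sub_le_iff_le_add.mpr (Nat.lt_succ_iff.mp h4)
  · have h1 : P * q * m ≤ x * m := by
      have : P * q ≤ x := by omega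
      exact Nat.mul_le_mul_right m this
    calc q * m / Q = P * (q * m) / (P * Q) := (Nat.mul_div_mul_left _ _ hPpos).symm
      _ = P * q * m / 2 ^ (2 * k) := by rw [hsplit, mul_assoc]
      _ ≤ x * m / 2 ^ (2 * k) := Nat.div_le_div_right h1
end
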